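/- arXiv:math/0407153 — 5 statements merged into one kernel-verified Lean document; each statement's English description precedes it below -/
import Mathlib

section
/- Let Ω ⊆ ℝ² be open and connected, and let f : Ω → ℝ³ be an immersion in conformal curvature coordinates with conformal factor ρ, unit normal ν and principal curvatures κ₁, κ₂. If the mean curvature H = (κ₁ + κ₂)/2 is constant on Ω, then the function (κ₂ − κ₁)ρ² is constant on Ω. -/
open scoped RealInnerProductSpace ContDiff

/-- First partial derivative (in the first coordinate direction of `ℝ × ℝ`). -/
noncomputable def pd1 {E : Type*} [NormedAddCommGroup E] [NormedSpace ℝ E]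
    (f : ℝ × ℝ → E) : ℝ × ℝ → E := fun p => fderiv ℝ f p (1, 0)

/-- Second partial derivative (in the second coordinate direction of `ℝ × ℝ`). -/
noncomputable def pd2 {E : Type*} [NormedAddCommGroup E] [NormedSpace ℝ E]
    (f : ℝ × ℝ → E) : ℝ × ℝ → E := fun p => fderiv ℝ f p (0, 1)

/-- `f : Ω → ℝ³` is an immersion in conformal curvature coordinates, with conformal
factor `ρ`, unit normal `ν` and principal curvatures `κ₁, κ₂`. -/
structure IsCCC (Ω : Set (ℝ × ℝ)) (f ν : ℝ × ℝ → EuclideanSpace ℝ (Fin 3))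
    (ρ κ₁ κ₂ : ℝ × ℝ → ℝ) : Prop where
  smooth_f : ContDiffOn ℝ ∞ f Ω
  smooth_ρ : ContDiffOn ℝ ∞ ρ Ω
  smooth_ν : ContDiffOn ℝ ∞ ν Ω
  smooth_κ₁ : ContDiffOn ℝ ∞ κ₁ Ω
  smooth_κ₂ : ContDiffOn ℝ ∞ κ₂ Ω
  ρ_pos : ∀ p ∈ Ω, 0 < ρ p
  g11 : ∀ p ∈ Ω, ⟪pd1 f p, pd1 f p⟫ = ρ p ^ 2
  g22 : ∀ p ∈ Ω, ⟪pd2 f p, pd2 f p⟫ = ρ p ^ 2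
  g12 : ∀ p ∈ Ω, ⟪pd1 f p, pd2 f p⟫ = 0
  nu_unit : ∀ p ∈ Ω, ⟪ν p, ν p⟫ = 1
  nu_f1 : ∀ p ∈ Ω, ⟪ν p, pd1 f p⟫ = 0
  nu_f2 : ∀ p ∈ Ω, ⟪ν p, pd2 f p⟫ = 0
  h12 : ∀ p ∈ Ω, ⟪ν p, pd1 (pd2 f) p⟫ = 0
  h11 : ∀ p ∈ Ω, ⟪ν p, pd1 (pd1 f) p⟫ = ρ p ^ 2 * κ₁ p
  h22 : ∀ p ∈ Ω, ⟪ν p, pd2 (pd2 f) p⟫ = ρ p ^ 2 * κ₂ p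

/-! The Codazzi equations in conformal curvature coordinates read
`∂₂(ρ²κ₁) = H ∂₂(ρ²)` and `∂₁(ρ²κ₂) = H ∂₁(ρ²)`. The first comes from differentiating
`⟪ν, f₁₁⟫ = ρ²κ₁` in the second direction and `⟪ν, f₁₂⟫ = 0` in the first: the third
derivatives `f₁₁₂ = f₁₂₁` cancel, and the remaining terms `⟪∂₂ν, f₁₁⟫`, `⟪∂₁ν, f₁₂⟫` are
evaluated by expanding in the orthogonal frame `(f₁, f₂, ν)` of `ℝ³`, whose inner products
with `f₁₁`, `f₁₂` are derivatives of the metric relations. The second is the first with the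
coordinates swapped. For constant `H`, `ρ²(κ₂ - κ₁) = 2(ρ²κ₂ - Hρ²) = -2(ρ²κ₁ - Hρ²)` has
both partial derivatives zero, hence is constant on the connected set `Ω`. -/

section DirectionalDerivative

variable {E F : Type*} [NormedAddCommGroup E] [NormedSpace ℝ E]
  [NormedAddCommGroup F] [NormedSpace ℝ F]

-- `pd1 g` and `pd2 g` are definitionally `dirDeriv (1, 0) g` and `dirDeriv (0, 1) g`.
noncomputable def dirDeriv (e : E) (g : E → F) : E → F := fun p => fderiv ℝ g p e

variable {Ω : Set E} {g g' : E → F} {p : E}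

lemma ContDiffOn.dirDeriv_of_isOpen {m n : WithTop ℕ∞} (hg : ContDiffOn ℝ n g Ω) (hΩ : IsOpen Ω)
    (hmn : m + 1 ≤ n) (e : E) : ContDiffOn ℝ m (dirDeriv e g) Ω :=
  (hg.fderiv_of_isOpen hΩ hmn).clm_apply contDiffOn_const

lemma ContDiffOn.differentiableAt_dirDeriv (hg : ContDiffOn ℝ 2 g Ω) (hΩ : IsOpen Ω)
    (hp : p ∈ Ω) (e : E) : DifferentiableAt ℝ (dirDeriv e g) p :=
  ((hg.dirDeriv_of_isOpen hΩ (by norm_num) e).contDiffAt (hΩ.mem_nhds hp)).differentiableAt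
    one_ne_zero

lemma dirDeriv_comm (hg : ContDiffAt ℝ 2 g p) (u w : E) :
    dirDeriv u (dirDeriv w g) p = dirDeriv w (dirDeriv u g) p := by
  have hd : DifferentiableAt ℝ (fderiv ℝ g) p :=
    (hg.fderiv_right (m := 1) le_rfl).differentiableAt one_ne_zero
  have hsnd (v x : E) : dirDeriv x (dirDeriv v g) p = fderiv ℝ (fderiv ℝ g) p x v := by
    change fderiv ℝ (fun q => fderiv ℝ g q v) p x = _
    simp [fderiv_clm_apply hd (differentiableAt_const v)]
  rw [hsnd, hsnd]
  exact hg.isSymmSndFDerivAt (by simp) u w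

lemma dirDeriv_congr_of_eqOn (hΩ : IsOpen Ω) (hp : p ∈ Ω) (h : Set.EqOn g g' Ω) (e : E) :
    dirDeriv e g p = dirDeriv e g' p := by
  simp only [dirDeriv, (h.eventuallyEq_of_mem (hΩ.mem_nhds hp)).fderiv_eq]

lemma dirDeriv_eq_zero_of_eqOn_mul_sub (hΩ : IsOpen Ω) (hp : p ∈ Ω) {φ Q P : E → ℝ}
    (hQ : DifferentiableAt ℝ Q p) (hP : DifferentiableAt ℝ P p) {c H : ℝ}
    (hφ : ∀ q ∈ Ω, φ q = c * (Q q - H * P q)) {e : E}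
    (hQP : dirDeriv e Q p = H * dirDeriv e P p) : dirDeriv e φ p = 0 := by
  rw [dirDeriv_congr_of_eqOn hΩ hp hφ]
  simp only [dirDeriv] at hQP ⊢
  have hderiv : HasFDerivAt (fun x => c * (Q x - H * P x))
      (c • (fderiv ℝ Q p - H • fderiv ℝ P p)) p :=
    (hQ.hasFDerivAt.sub (hP.hasFDerivAt.const_mul H)).const_mul c
  simp [hderiv.fderiv, hQP]

lemma exists_eq_const_of_pd_eq_zero {Ω : Set (ℝ × ℝ)} (hΩ : IsOpen Ω)
    (hconn : IsPreconnected Ω) {φ : ℝ × ℝ → ℝ} (hφ : DifferentiableOn ℝ φ Ω)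
    (h₁ : ∀ p ∈ Ω, pd1 φ p = 0) (h₂ : ∀ p ∈ Ω, pd2 φ p = 0) : ∃ c, ∀ p ∈ Ω, φ p = c :=
  hΩ.exists_is_const_of_fderiv_eq_zero hconn hφ fun p hp =>
    ContinuousLinearMap.prod_ext (ContinuousLinearMap.ext_ring (by simpa [pd1] using h₁ p hp))
      (ContinuousLinearMap.ext_ring (by simpa [pd2] using h₂ p hp))

end DirectionalDerivative

section Inner

variable {E F : Type*} [NormedAddCommGroup E] [NormedSpace ℝ E]
  [NormedAddCommGroup F] [InnerProductSpace ℝ F] {Ω : Set E} {p : E} {u v : E → F}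

lemma inner_dirDeriv_add_of_eqOn (hΩ : IsOpen Ω) (hp : p ∈ Ω) (hu : DifferentiableAt ℝ u p)
    (hv : DifferentiableAt ℝ v p) {φ : E → ℝ} (h : ∀ q ∈ Ω, ⟪u q, v q⟫ = φ q) (e : E) :
    ⟪dirDeriv e u p, v p⟫ + ⟪u p, dirDeriv e v p⟫ = dirDeriv e φ p := by
  rw [← dirDeriv_congr_of_eqOn hΩ hp h]
  simp only [dirDeriv, fderiv_inner_apply ℝ hu hv, add_comm]

lemma inner_dirDeriv_add_of_eqOn_const (hΩ : IsOpen Ω) (hp : p ∈ Ω)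
    (hu : DifferentiableAt ℝ u p) (hv : DifferentiableAt ℝ v p) {c : ℝ}
    (h : ∀ q ∈ Ω, ⟪u q, v q⟫ = c) (e : E) :
    ⟪dirDeriv e u p, v p⟫ + ⟪u p, dirDeriv e v p⟫ = 0 := by
  simpa [dirDeriv] using inner_dirDeriv_add_of_eqOn hΩ hp hu hv h e

lemma inner_dirDeriv_self_eq_zero_of_eqOn_const (hΩ : IsOpen Ω) (hp : p ∈ Ω)
    (hv : DifferentiableAt ℝ v p) {c : ℝ} (h : ∀ q ∈ Ω, ⟪v q, v q⟫ = c) (e : E) :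
    ⟪dirDeriv e v p, v p⟫ = 0 := by
  have := inner_dirDeriv_add_of_eqOn_const hΩ hp hv hv h e
  rw [real_inner_comm (dirDeriv e v p)] at this
  linarith

end Inner

section Frame

variable {F : Type*} [NormedAddCommGroup F] [InnerProductSpace ℝ F]

lemma Orthonormal.inner_eq_sum_inner_mul_inner {ι : Type*} [Fintype ι] [Nonempty ι]
    {v : ι → F} (hv : Orthonormal ℝ v) (hcard : Fintype.card ι = Module.finrank ℝ F)
    (x y : F) : ⟪x, y⟫ = ∑ i, ⟪x, v i⟫ * ⟪v i, y⟫ :=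
  ((OrthonormalBasis.mk hv (hv.linearIndependent.span_eq_top_of_card_eq_finrank
    hcard).ge).sum_inner_mul_inner x y).symm.trans (by simp)

lemma inner_eq_of_conformal_frame (hF : Module.finrank ℝ F = 3) {r : ℝ} (hr : r ≠ 0)
    {a b n : F} (ha : ⟪a, a⟫ = r ^ 2) (hb : ⟪b, b⟫ = r ^ 2) (hn : ⟪n, n⟫ = 1)
    (hab : ⟪a, b⟫ = 0) (han : ⟪a, n⟫ = 0) (hbn : ⟪b, n⟫ = 0) (x y : F) :
    ⟪x, y⟫ = (⟪x, a⟫ * ⟪a, y⟫ + ⟪x, b⟫ * ⟪b, y⟫) / r ^ 2 + ⟪x, n⟫ * ⟪n, y⟫ := by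
  have hon : Orthonormal ℝ ![r⁻¹ • a, r⁻¹ • b, n] := by
    have hba : ⟪b, a⟫ = 0 := by rwa [real_inner_comm]
    have hna : ⟪n, a⟫ = 0 := by rwa [real_inner_comm]
    have hnb : ⟪n, b⟫ = 0 := by rwa [real_inner_comm]
    rw [orthonormal_iff_ite]
    intro i j
    fin_cases i <;> fin_cases j <;>
      simp only [Fin.zero_eta, Fin.mk_one, Fin.reduceFinMk, Matrix.cons_val, real_inner_smul_left,
        real_inner_smul_right, ha, hb, hn, hab, han, hbn, hba, hna, hnb] <;>
      field_simp <;> simp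
  rw [hon.inner_eq_sum_inner_mul_inner (by simp [hF]) x y]
  simp [Fin.sum_univ_three, real_inner_smul_left, real_inner_smul_right]
  field_simp

end Frame

section Codazzi

variable {E F : Type*} [NormedAddCommGroup E] [NormedSpace ℝ E]
  [NormedAddCommGroup F] [InnerProductSpace ℝ F]

-- `IsCCC` without smoothness and along arbitrary directions `u`, `w`: swapping the directions
-- turns the Codazzi equation for `∂₂(ρ²κ₁)` into the one for `∂₁(ρ²κ₂)`.
structure IsConformalCurvatureFrame (Ω : Set E) (f ν : E → F) (ρ κ κ' : E → ℝ) (u w : E) :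
    Prop where
  metric_uu : ∀ q ∈ Ω, ⟪dirDeriv u f q, dirDeriv u f q⟫ = ρ q ^ 2
  metric_ww : ∀ q ∈ Ω, ⟪dirDeriv w f q, dirDeriv w f q⟫ = ρ q ^ 2
  metric_uw : ∀ q ∈ Ω, ⟪dirDeriv u f q, dirDeriv w f q⟫ = 0
  normal_unit : ∀ q ∈ Ω, ⟪ν q, ν q⟫ = 1
  normal_u : ∀ q ∈ Ω, ⟪ν q, dirDeriv u f q⟫ = 0
  normal_w : ∀ q ∈ Ω, ⟪ν q, dirDeriv w f q⟫ = 0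
  second_uw : ∀ q ∈ Ω, ⟪ν q, dirDeriv u (dirDeriv w f) q⟫ = 0
  second_uu : ∀ q ∈ Ω, ⟪ν q, dirDeriv u (dirDeriv u f) q⟫ = ρ q ^ 2 * κ q
  second_ww : ∀ q ∈ Ω, ⟪ν q, dirDeriv w (dirDeriv w f) q⟫ = ρ q ^ 2 * κ' q

namespace IsConformalCurvatureFrame

variable {Ω : Set E} {f ν : E → F} {ρ κ κ' : E → ℝ} {u w p : E}

lemma inner_du_duw (hfr : IsConformalCurvatureFrame Ω f ν ρ κ κ' u w) (hΩ : IsOpen Ω)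
    (hf : ContDiffOn ℝ 2 f Ω) (hp : p ∈ Ω) :
    ⟪dirDeriv u f p, dirDeriv u (dirDeriv w f) p⟫ = dirDeriv w (fun q => ρ q ^ 2) p / 2 := by
  have dfu := hf.differentiableAt_dirDeriv hΩ hp u
  have h := inner_dirDeriv_add_of_eqOn hΩ hp dfu dfu hfr.metric_uu w
  rw [real_inner_comm, dirDeriv_comm (hf.contDiffAt (hΩ.mem_nhds hp)) w u] at h
  linarith

lemma inner_dw_duu (hfr : IsConformalCurvatureFrame Ω f ν ρ κ κ' u w)
    (hΩ : IsOpen Ω) (hf : ContDiffOn ℝ 2 f Ω) (hp : p ∈ Ω) :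
    ⟪dirDeriv w f p, dirDeriv u (dirDeriv u f) p⟫ = -(dirDeriv w (fun q => ρ q ^ 2) p / 2) := by
  have h := inner_dirDeriv_add_of_eqOn_const hΩ hp (hf.differentiableAt_dirDeriv hΩ hp u)
    (hf.differentiableAt_dirDeriv hΩ hp w) hfr.metric_uw u
  rw [real_inner_comm, hfr.inner_du_duw hΩ hf hp] at h
  linarith

lemma inner_eq_frame (hfr : IsConformalCurvatureFrame Ω f ν ρ κ κ' u w)
    (hF : Module.finrank ℝ F = 3) (hp : p ∈ Ω) (hρ : ρ p ≠ 0) (x y : F) :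
    ⟪x, y⟫ = (⟪x, dirDeriv u f p⟫ * ⟪dirDeriv u f p, y⟫
      + ⟪x, dirDeriv w f p⟫ * ⟪dirDeriv w f p, y⟫) / ρ p ^ 2 + ⟪x, ν p⟫ * ⟪ν p, y⟫ :=
  inner_eq_of_conformal_frame hF hρ (hfr.metric_uu p hp) (hfr.metric_ww p hp)
    (hfr.normal_unit p hp) (hfr.metric_uw p hp)
    (by rw [real_inner_comm]; exact hfr.normal_u p hp)
    (by rw [real_inner_comm]; exact hfr.normal_w p hp) x y

lemma inner_dwNormal_duu (hfr : IsConformalCurvatureFrame Ω f ν ρ κ κ' u w)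
    (hΩ : IsOpen Ω) (hF : Module.finrank ℝ F = 3) (hf : ContDiffOn ℝ 2 f Ω)
    (hν : DifferentiableOn ℝ ν Ω) (hp : p ∈ Ω) (hρ : ρ p ≠ 0) :
    ⟪dirDeriv w ν p, dirDeriv u (dirDeriv u f) p⟫
      = κ' p * dirDeriv w (fun q => ρ q ^ 2) p / 2 := by
  have dν := hν.differentiableAt (hΩ.mem_nhds hp)
  have hνu := inner_dirDeriv_add_of_eqOn_const hΩ hp dν (hf.differentiableAt_dirDeriv hΩ hp u)
    hfr.normal_u w
  have hνw := inner_dirDeriv_add_of_eqOn_const hΩ hp dν (hf.differentiableAt_dirDeriv hΩ hp w)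
    hfr.normal_w w
  rw [dirDeriv_comm (hf.contDiffAt (hΩ.mem_nhds hp)) w u, hfr.second_uw p hp] at hνu
  rw [hfr.second_ww p hp] at hνw
  rw [hfr.inner_eq_frame hF hp hρ, hfr.inner_dw_duu hΩ hf hp,
    inner_dirDeriv_self_eq_zero_of_eqOn_const hΩ hp dν hfr.normal_unit,
    show ⟪dirDeriv w ν p, dirDeriv u f p⟫ = 0 by linarith,
    show ⟪dirDeriv w ν p, dirDeriv w f p⟫ = -(ρ p ^ 2 * κ' p) by linarith]
  field_simp
  ring

lemma inner_duNormal_duw (hfr : IsConformalCurvatureFrame Ω f ν ρ κ κ' u w)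
    (hΩ : IsOpen Ω) (hF : Module.finrank ℝ F = 3) (hf : ContDiffOn ℝ 2 f Ω)
    (hν : DifferentiableOn ℝ ν Ω) (hp : p ∈ Ω) (hρ : ρ p ≠ 0) :
    ⟪dirDeriv u ν p, dirDeriv u (dirDeriv w f) p⟫
      = -(κ p * dirDeriv w (fun q => ρ q ^ 2) p / 2) := by
  have dν := hν.differentiableAt (hΩ.mem_nhds hp)
  have hνu := inner_dirDeriv_add_of_eqOn_const hΩ hp dν (hf.differentiableAt_dirDeriv hΩ hp u)
    hfr.normal_u u
  have hνw := inner_dirDeriv_add_of_eqOn_const hΩ hp dν (hf.differentiableAt_dirDeriv hΩ hp w)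
    hfr.normal_w u
  rw [hfr.second_uu p hp] at hνu
  rw [hfr.second_uw p hp] at hνw
  rw [hfr.inner_eq_frame hF hp hρ, hfr.inner_du_duw hΩ hf hp,
    inner_dirDeriv_self_eq_zero_of_eqOn_const hΩ hp dν hfr.normal_unit,
    show ⟪dirDeriv u ν p, dirDeriv u f p⟫ = -(ρ p ^ 2 * κ p) by linarith,
    show ⟪dirDeriv u ν p, dirDeriv w f p⟫ = 0 by linarith]
  field_simp
  ring

theorem codazzi (hfr : IsConformalCurvatureFrame Ω f ν ρ κ κ' u w) (hΩ : IsOpen Ω)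
    (hF : Module.finrank ℝ F = 3) (hf : ContDiffOn ℝ 3 f Ω) (hν : DifferentiableOn ℝ ν Ω)
    (hp : p ∈ Ω) (hρ : ρ p ≠ 0) :
    dirDeriv w (fun q => ρ q ^ 2 * κ q) p
      = (κ p + κ' p) / 2 * dirDeriv w (fun q => ρ q ^ 2) p := by
  have hf₂ : ContDiffOn ℝ 2 f Ω := hf.of_le (by norm_num)
  have hfu : ContDiffOn ℝ 2 (dirDeriv u f) Ω := hf.dirDeriv_of_isOpen hΩ (by norm_num) u
  have hfw : ContDiffOn ℝ 2 (dirDeriv w f) Ω := hf.dirDeriv_of_isOpen hΩ (by norm_num) w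
  have dν := hν.differentiableAt (hΩ.mem_nhds hp)
  have hνuu := inner_dirDeriv_add_of_eqOn hΩ hp dν (hfu.differentiableAt_dirDeriv hΩ hp u)
    hfr.second_uu w
  have hνuw := inner_dirDeriv_add_of_eqOn_const hΩ hp dν (hfw.differentiableAt_dirDeriv hΩ hp u)
    hfr.second_uw u
  have hsymm : Set.EqOn (dirDeriv w (dirDeriv u f)) (dirDeriv u (dirDeriv w f)) Ω :=
    fun q hq => dirDeriv_comm (hf₂.contDiffAt (hΩ.mem_nhds hq)) w u
  rw [dirDeriv_comm (hfu.contDiffAt (hΩ.mem_nhds hp)) w u, dirDeriv_congr_of_eqOn hΩ hp hsymm,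
    hfr.inner_dwNormal_duu hΩ hF hf₂ hν hp hρ] at hνuu
  rw [hfr.inner_duNormal_duw hΩ hF hf₂ hν hp hρ] at hνuw
  linear_combination hνuw - hνuu

end IsConformalCurvatureFrame

end Codazzi

section CCC

variable {Ω : Set (ℝ × ℝ)} {f ν : ℝ × ℝ → EuclideanSpace ℝ (Fin 3)} {ρ κ₁ κ₂ : ℝ × ℝ → ℝ}

lemma IsCCC.isConformalCurvatureFrame (hccc : IsCCC Ω f ν ρ κ₁ κ₂) :
    IsConformalCurvatureFrame Ω f ν ρ κ₁ κ₂ (1, 0) (0, 1) :=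
  ⟨hccc.g11, hccc.g22, hccc.g12, hccc.nu_unit, hccc.nu_f1, hccc.nu_f2, hccc.h12, hccc.h11,
    hccc.h22⟩

lemma IsCCC.isConformalCurvatureFrame_swap (hccc : IsCCC Ω f ν ρ κ₁ κ₂) (hΩ : IsOpen Ω) :
    IsConformalCurvatureFrame Ω f ν ρ κ₂ κ₁ (0, 1) (1, 0) where
  metric_uu := hccc.g22
  metric_ww := hccc.g11
  metric_uw q hq := by rw [real_inner_comm]; exact hccc.g12 q hq
  normal_unit := hccc.nu_unit
  normal_u := hccc.nu_f2
  normal_w := hccc.nu_f1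
  second_uw q hq := by
    rw [dirDeriv_comm ((hccc.smooth_f.contDiffAt (hΩ.mem_nhds hq)).of_le
      (WithTop.coe_le_coe.2 le_top))]
    exact hccc.h12 q hq
  second_uu := hccc.h22
  second_ww := hccc.h11

end CCC

/-- On an open connected domain, for an immersion in conformal curvature
coordinates with constant mean curvature `H = (κ₁ + κ₂)/2`, the function `(κ₂ - κ₁)ρ²`
is constant. -/
theorem hopf_const (Ω : Set (ℝ × ℝ)) (hΩ : IsOpen Ω) (hconn : IsConnected Ω)
    (f ν : ℝ × ℝ → EuclideanSpace ℝ (Fin 3)) (ρ κ₁ κ₂ : ℝ × ℝ → ℝ)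
    (hccc : IsCCC Ω f ν ρ κ₁ κ₂)
    (hH : ∃ H : ℝ, ∀ p ∈ Ω, (κ₁ p + κ₂ p) / 2 = H) :
    ∃ c : ℝ, ∀ p ∈ Ω, (κ₂ p - κ₁ p) * ρ p ^ 2 = c := by
  obtain ⟨H, hH⟩ := hH
  have hf : ContDiffOn ℝ 3 f Ω := hccc.smooth_f.of_le (WithTop.coe_le_coe.2 le_top)
  have hν : DifferentiableOn ℝ ν Ω := hccc.smooth_ν.differentiableOn (by simp)
  have hF : Module.finrank ℝ (EuclideanSpace ℝ (Fin 3)) = 3 := by simp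
  have hρ : DifferentiableOn ℝ ρ Ω := hccc.smooth_ρ.differentiableOn (by simp)
  have hκ₁ : DifferentiableOn ℝ κ₁ Ω := hccc.smooth_κ₁.differentiableOn (by simp)
  have hκ₂ : DifferentiableOn ℝ κ₂ Ω := hccc.smooth_κ₂.differentiableOn (by simp)
  have hP : DifferentiableOn ℝ (fun q => ρ q ^ 2) Ω := hρ.pow 2
  refine exists_eq_const_of_pd_eq_zero hΩ hconn.isPreconnected ((hκ₂.sub hκ₁).mul hP)
    (fun p hp => ?_) (fun p hp => ?_)
  · refine dirDeriv_eq_zero_of_eqOn_mul_sub hΩ hp (Q := fun q => ρ q ^ 2 * κ₂ q)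
      ((hP.mul hκ₂).differentiableAt (hΩ.mem_nhds hp)) (hP.differentiableAt (hΩ.mem_nhds hp))
      (c := 2) (fun q hq => by linear_combination (-2 * ρ q ^ 2) * hH q hq) ?_
    rw [(hccc.isConformalCurvatureFrame_swap hΩ).codazzi hΩ hF hf hν hp (hccc.ρ_pos p hp).ne',
      add_comm, hH p hp]
  · refine dirDeriv_eq_zero_of_eqOn_mul_sub hΩ hp (Q := fun q => ρ q ^ 2 * κ₁ q)
      ((hP.mul hκ₁).differentiableAt (hΩ.mem_nhds hp)) (hP.differentiableAt (hΩ.mem_nhds hp))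
      (c := -2) (fun q hq => by linear_combination (2 * ρ q ^ 2) * hH q hq) ?_
    rw [hccc.isConformalCurvatureFrame.codazzi hΩ hF hf hν hp (hccc.ρ_pos p hp).ne', hH p hp]
end

section
/- Let Ω ⊆ ℝ² be open, let f : Ω → ℝ³ be an immersion in conformal curvature coordinates with conformal factor ρ, unit normal ν and principal curvatures κ₁, κ₂, and let u : Ω → ℝ be smooth. For t ∈ ℝ set f(t) := f + t·u·ν, g₁₁(t) := ⟨∂₁f(t), ∂₁f(t)⟩, g₂₂(t) := ⟨∂₂f(t), ∂₂f(t)⟩, g₁₂(t) := ⟨∂₁f(t), ∂₂f(t)⟩, and let J(t) be the 2×2 real matrix (g₁₁(t)g₂₂(t) − g₁₂(t)²)^(−1/2) · [[−g₁₂(t), −g₂₂(t)], [g₁₁(t), g₁₂(t)]]. Then at every point of Ω the map t ↦ J(t) is differentiable at t = 0, with J(0) = [[0, −1], [1, 0]] and J′(0) = [[0, u(κ₂ − κ₁)], [u(κ₂ − κ₁), 0]]. -/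
open scoped RealInnerProductSpace ContDiff

/-- The complex structure matrix `J(t)` of the varied surface `f + t·u·ν`, evaluated
at a point `p`, as a `2 × 2` real matrix. -/
noncomputable def Jmat (f ν : ℝ × ℝ → EuclideanSpace ℝ (Fin 3)) (u : ℝ × ℝ → ℝ)
    (p : ℝ × ℝ) (t : ℝ) : Fin 2 → Fin 2 → ℝ :=
  let ft : ℝ × ℝ → EuclideanSpace ℝ (Fin 3) := fun q => f q + t • (u q • ν q)
  let g11 : ℝ := ⟪pd1 ft p, pd1 ft p⟫
  let g22 : ℝ := ⟪pd2 ft p, pd2 ft p⟫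
  let g12 : ℝ := ⟪pd1 ft p, pd2 ft p⟫
  (g11 * g22 - g12 ^ 2) ^ (-(1 / 2) : ℝ) • ![![-g12, -g22], ![g11, g12]]


/-!
Along the normal variation `f + t u ν` the tangent vectors move by `t ∂ᵢ(u ν)`, and differentiating
`⟪ν, ∂ⱼ f⟫ = 0` gives `⟪∂ⱼ f, ∂ᵢ(u ν)⟫ = -u ⟪ν, ∂ᵢ∂ⱼ f⟫`. Hence the metric varies as
`g(t) = ρ² (I - 2 t u diag(κ₁, κ₂)) + O(t²)`, and differentiating the explicit formula for `J` in
terms of `g` at the conformal metric `ρ² I` gives `J'(0)`.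
-/

open Filter Topology

section ComplexStructure

theorem sq_rpow_neg_half {x : ℝ} (hx : 0 ≤ x) : (x ^ 2) ^ (-(1 / 2) : ℝ) = x⁻¹ := by
  rw [← Real.rpow_two, ← Real.rpow_mul hx]
  norm_num [Real.rpow_neg_one]

/-- The rotation by `π/2` with respect to the metric `[[g₁₁, g₁₂], [g₁₂, g₂₂]]`. -/
noncomputable def complexStructureOfMetric (g₁₁ g₁₂ g₂₂ : ℝ) : Fin 2 → Fin 2 → ℝ :=
  (g₁₁ * g₂₂ - g₁₂ ^ 2) ^ (-(1 / 2) : ℝ) • ![![-g₁₂, -g₂₂], ![g₁₁, g₁₂]]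

theorem complexStructureOfMetric_conformal {lam : ℝ} (hlam : 0 < lam) :
    complexStructureOfMetric lam 0 lam = ![![0, -1], ![1, 0]] := by
  rw [complexStructureOfMetric, show lam * lam - 0 ^ 2 = lam ^ 2 by ring,
    sq_rpow_neg_half hlam.le]
  ext i j
  fin_cases i <;> fin_cases j <;> simp [hlam.ne']

variable {g₁₁ g₁₂ g₂₂ : ℝ → ℝ} {lam c k₁ k₂ : ℝ}

theorem hasDerivAt_det_rpow_neg_half (hlam : 0 < lam) (h₁₁ : g₁₁ 0 = lam) (h₁₂ : g₁₂ 0 = 0)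
    (h₂₂ : g₂₂ 0 = lam) (hg₁₁ : HasDerivAt g₁₁ (-2 * c * (lam * k₁)) 0)
    (hg₁₂ : HasDerivAt g₁₂ 0 0) (hg₂₂ : HasDerivAt g₂₂ (-2 * c * (lam * k₂)) 0) :
    HasDerivAt (fun t => (g₁₁ t * g₂₂ t - g₁₂ t ^ 2) ^ (-(1 / 2) : ℝ)) (c * (k₁ + k₂) / lam) 0 := by
  have hdet0 : g₁₁ 0 * g₂₂ 0 - g₁₂ 0 ^ 2 = lam ^ 2 := by rw [h₁₁, h₁₂, h₂₂]; ring
  have hpow : (lam ^ 2) ^ ((-(1 / 2) : ℝ) - 1) = (lam ^ 3)⁻¹ := by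
    rw [← Real.rpow_two, ← Real.rpow_mul hlam.le]
    norm_num [Real.rpow_neg hlam.le]
  have h := ((hg₁₁.fun_mul hg₂₂).fun_sub (hg₁₂.fun_pow 2)).rpow_const (p := (-(1 / 2) : ℝ))
    (Or.inl (by rw [hdet0]; positivity))
  convert h using 1
  rw [hdet0, hpow, h₁₁, h₂₂]
  field_simp
  ring

theorem HasDerivAt.complexStructureOfMetric (hlam : 0 < lam) (h₁₁ : g₁₁ 0 = lam)
    (h₁₂ : g₁₂ 0 = 0) (h₂₂ : g₂₂ 0 = lam) (hg₁₁ : HasDerivAt g₁₁ (-2 * c * (lam * k₁)) 0)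
    (hg₁₂ : HasDerivAt g₁₂ 0 0) (hg₂₂ : HasDerivAt g₂₂ (-2 * c * (lam * k₂)) 0) :
    HasDerivAt (fun t => complexStructureOfMetric (g₁₁ t) (g₁₂ t) (g₂₂ t))
      ![![0, c * (k₂ - k₁)], ![c * (k₂ - k₁), 0]] 0 := by
  have hs := hasDerivAt_det_rpow_neg_half hlam h₁₁ h₁₂ h₂₂ hg₁₁ hg₁₂ hg₂₂
  have hs0 : (g₁₁ 0 * g₂₂ 0 - g₁₂ 0 ^ 2) ^ (-(1 / 2) : ℝ) = lam⁻¹ := by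
    rw [h₁₁, h₁₂, h₂₂, show lam * lam - 0 ^ 2 = lam ^ 2 by ring, sq_rpow_neg_half hlam.le]
  refine hasDerivAt_pi.2 fun i => hasDerivAt_pi.2 fun j => ?_
  fin_cases i <;> fin_cases j
  · refine (hs.fun_mul hg₁₂.fun_neg).congr_deriv ?_
    rw [hs0, h₁₂]; simp
  · refine (hs.fun_mul hg₂₂.fun_neg).congr_deriv ?_
    rw [hs0, h₂₂]
    show c * (k₁ + k₂) / lam * -lam + lam⁻¹ * -(-2 * c * (lam * k₂)) = c * (k₂ - k₁)
    field_simp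
    ring
  · refine (hs.fun_mul hg₁₁).congr_deriv ?_
    rw [hs0, h₁₁]
    show c * (k₁ + k₂) / lam * lam + lam⁻¹ * (-2 * c * (lam * k₁)) = c * (k₂ - k₁)
    field_simp
    ring
  · refine (hs.fun_mul hg₁₂).congr_deriv ?_
    rw [hs0, h₁₂]; simp

end ComplexStructure

section NormalVariation

variable {E F : Type*} [NormedAddCommGroup E] [NormedSpace ℝ E]
  [NormedAddCommGroup F] [InnerProductSpace ℝ F]

theorem fderiv_fderiv_apply_comm {f : E → F} {p : E} (hf : ContDiffAt ℝ 2 f p) (v w : E) :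
    fderiv ℝ (fun q => fderiv ℝ f q w) p v = fderiv ℝ (fun q => fderiv ℝ f q v) p w := by
  have hdf : DifferentiableAt ℝ (fderiv ℝ f) p :=
    (hf.fderiv_right (m := 1) (by norm_num)).differentiableAt (by norm_num)
  simp only [fderiv_clm_apply hdf (differentiableAt_const _), fderiv_fun_const, Pi.zero_apply,
    ContinuousLinearMap.comp_zero, zero_add, ContinuousLinearMap.flip_apply]
  exact hf.isSymmSndFDerivAt (by simp) v w

theorem inner_fderiv_eq_neg_of_eventually_inner_eq_zero {ν X : E → F} {p : E}
    (hν : DifferentiableAt ℝ ν p) (hX : DifferentiableAt ℝ X p)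
    (h : ∀ᶠ q in 𝓝 p, ⟪ν q, X q⟫ = 0) (v : E) :
    ⟪fderiv ℝ ν p v, X p⟫ = -⟪ν p, fderiv ℝ X p v⟫ := by
  have h0 : fderiv ℝ (fun q => ⟪ν q, X q⟫) p v = 0 := by
    have h' : (fun q => ⟪ν q, X q⟫) =ᶠ[𝓝 p] fun _ => (0 : ℝ) := h
    rw [h'.fderiv_eq, fderiv_const_apply, zero_apply]
  rw [fderiv_inner_apply ℝ hν hX] at h0
  linarith

theorem inner_fderiv_smul_eq_neg_of_eventually_inner_eq_zero {ν X : E → F} {u : E → ℝ} {p : E}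
    (hν : DifferentiableAt ℝ ν p) (hX : DifferentiableAt ℝ X p) (hu : DifferentiableAt ℝ u p)
    (h : ∀ᶠ q in 𝓝 p, ⟪ν q, X q⟫ = 0) (v : E) :
    ⟪X p, fderiv ℝ (fun q => u q • ν q) p v⟫ = -(u p * ⟪ν p, fderiv ℝ X p v⟫) := by
  rw [fderiv_fun_smul hu hν]
  simp only [add_apply, smul_apply,
    ContinuousLinearMap.smulRight_apply, inner_add_right, real_inner_smul_right]
  rw [real_inner_comm (fderiv ℝ ν p v), inner_fderiv_eq_neg_of_eventually_inner_eq_zero hν hX h v,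
    real_inner_comm (ν p), h.self_of_nhds]
  ring

theorem hasDerivAt_inner_add_smul_add_smul (a b c d : F) :
    HasDerivAt (fun t : ℝ => ⟪a + t • b, c + t • d⟫) (⟪a, d⟫ + ⟪b, c⟫) 0 := by
  have hl : HasDerivAt (fun t : ℝ => a + t • b) b 0 := by
    simpa using ((hasDerivAt_id (0:ℝ)).smul_const b).const_add a
  have hr : HasDerivAt (fun t : ℝ => c + t • d) d 0 := by
    simpa using ((hasDerivAt_id (0:ℝ)).smul_const d).const_add c
  simpa using hl.inner ℝ hr

/-- With `v = eᵢ`, `w = eⱼ` this is the coefficient `gᵢⱼ(t)` at `p` of the surface `f + t u ν`. -/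
noncomputable def normalVariationMetric (f ν : E → F) (u : E → ℝ) (p v w : E) (t : ℝ) : ℝ :=
  ⟪fderiv ℝ (fun q => f q + t • (u q • ν q)) p v, fderiv ℝ (fun q => f q + t • (u q • ν q)) p w⟫

theorem normalVariationMetric_zero (f ν : E → F) (u : E → ℝ) (p v w : E) :
    normalVariationMetric f ν u p v w 0 = ⟪fderiv ℝ f p v, fderiv ℝ f p w⟫ := by
  simp [normalVariationMetric]

theorem hasDerivAt_normalVariationMetric {f ν : E → F} {u : E → ℝ} {p v w : E} {h : ℝ}
    (hf : ContDiffAt ℝ 2 f p) (hν : DifferentiableAt ℝ ν p) (hu : DifferentiableAt ℝ u p)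
    (hνv : ∀ᶠ q in 𝓝 p, ⟪ν q, fderiv ℝ f q v⟫ = 0) (hνw : ∀ᶠ q in 𝓝 p, ⟪ν q, fderiv ℝ f q w⟫ = 0)
    (hh : ⟪ν p, fderiv ℝ (fun q => fderiv ℝ f q w) p v⟫ = h) :
    HasDerivAt (normalVariationMetric f ν u p v w) (-2 * u p * h) 0 := by
  have hdf : DifferentiableAt ℝ f p := hf.differentiableAt (by norm_num)
  have hdf' : ∀ z, DifferentiableAt ℝ (fun q => fderiv ℝ f q z) p := fun z =>
    ((hf.fderiv_right (m := 1) (by norm_num)).differentiableAt (by norm_num)).clm_apply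
      (differentiableAt_const z)
  have huν : DifferentiableAt ℝ (fun q => u q • ν q) p := hu.smul hν
  have hvar : ∀ (t : ℝ) z, fderiv ℝ (fun q => f q + t • (u q • ν q)) p z
      = fderiv ℝ f p z + t • fderiv ℝ (fun q => u q • ν q) p z := fun t z => by
    rw [HasFDerivAt.fderiv (f := fun q => f q + t • (u q • ν q))
      (hdf.hasFDerivAt.add (huν.hasFDerivAt.const_smul t))]
    rfl
  have key := hasDerivAt_inner_add_smul_add_smul (fderiv ℝ f p v)
    (fderiv ℝ (fun q => u q • ν q) p v) (fderiv ℝ f p w) (fderiv ℝ (fun q => u q • ν q) p w)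
  rw [real_inner_comm (fderiv ℝ f p w),
    inner_fderiv_smul_eq_neg_of_eventually_inner_eq_zero hν (hdf' v) hu hνv,
    inner_fderiv_smul_eq_neg_of_eventually_inner_eq_zero hν (hdf' w) hu hνw,
    fderiv_fderiv_apply_comm hf, hh] at key
  convert key using 1
  · funext t
    simp only [normalVariationMetric, hvar]
  · ring

end NormalVariation

/-- The first variation of the complex structure: `J(0) = J₀` and
`J'(0) = J₁ = [[0, uκ], [uκ, 0]]` with `κ = κ₂ - κ₁`. -/
theorem complex_structure_first_variation (Ω : Set (ℝ × ℝ)) (hΩ : IsOpen Ω)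
    (f ν : ℝ × ℝ → EuclideanSpace ℝ (Fin 3)) (ρ κ₁ κ₂ : ℝ × ℝ → ℝ)
    (hccc : IsCCC Ω f ν ρ κ₁ κ₂)
    (u : ℝ × ℝ → ℝ) (hu : ContDiffOn ℝ ∞ u Ω) :
    ∀ p ∈ Ω,
      Jmat f ν u p 0 = ![![0, -1], ![1, 0]] ∧
      HasDerivAt (Jmat f ν u p)
        ![![0, u p * (κ₂ p - κ₁ p)], ![u p * (κ₂ p - κ₁ p), 0]] 0 := by
  intro p hp
  have hΩp : Ω ∈ 𝓝 p := hΩ.mem_nhds hp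
  have hf : ContDiffAt ℝ 2 f p :=
    (hccc.smooth_f.contDiffAt hΩp).of_le (WithTop.coe_le_coe.2 le_top)
  have hν : DifferentiableAt ℝ ν p :=
    (hccc.smooth_ν.contDiffAt hΩp).differentiableAt (by norm_num)
  have hup : DifferentiableAt ℝ u p := (hu.contDiffAt hΩp).differentiableAt (by norm_num)
  have hν₁ : ∀ᶠ q in 𝓝 p, ⟪ν q, fderiv ℝ f q (1, 0)⟫ = 0 := eventually_of_mem hΩp hccc.nu_f1
  have hν₂ : ∀ᶠ q in 𝓝 p, ⟪ν q, fderiv ℝ f q (0, 1)⟫ = 0 := eventually_of_mem hΩp hccc.nu_f2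
  set g := normalVariationMetric f ν u p
  have hJ : Jmat f ν u p = fun t => complexStructureOfMetric (g (1, 0) (1, 0) t)
      (g (1, 0) (0, 1) t) (g (0, 1) (0, 1) t) := rfl
  have hg₁₁ : g (1, 0) (1, 0) 0 = ρ p ^ 2 :=
    (normalVariationMetric_zero f ν u p _ _).trans (hccc.g11 p hp)
  have hg₁₂ : g (1, 0) (0, 1) 0 = 0 :=
    (normalVariationMetric_zero f ν u p _ _).trans (hccc.g12 p hp)
  have hg₂₂ : g (0, 1) (0, 1) 0 = ρ p ^ 2 :=
    (normalVariationMetric_zero f ν u p _ _).trans (hccc.g22 p hp)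
  have hρ : 0 < ρ p ^ 2 := pow_pos (hccc.ρ_pos p hp) 2
  refine ⟨?_, ?_⟩
  · simp only [hJ, hg₁₁, hg₁₂, hg₂₂, complexStructureOfMetric_conformal hρ]
  · rw [hJ]
    refine .complexStructureOfMetric hρ hg₁₁ hg₁₂ hg₂₂
      (hasDerivAt_normalVariationMetric hf hν hup hν₁ hν₁ (hccc.h11 p hp)) ?_
      (hasDerivAt_normalVariationMetric hf hν hup hν₂ hν₂ (hccc.h22 p hp))
    simpa only [mul_zero] using hasDerivAt_normalVariationMetric hf hν hup hν₁ hν₂ (hccc.h12 p hp)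
end

section
/- Let Ω ⊆ ℝ² be open, let f : Ω → ℝ³ be an immersion in conformal curvature coordinates with conformal factor ρ, unit normal ν and principal curvatures κ₁, κ₂, set κ := κ₂ − κ₁, and suppose the function κρ² is constant on Ω. Then for every smooth u : Ω → ℝ one has, at every point of Ω: ∂₁(uκ·∂₁f) − ∂₂(uκ·∂₂f) = κ(∂₁u·∂₁f − ∂₂u·∂₂f) − κ²ρ²·u·ν. -/
open scoped RealInnerProductSpace ContDiff

/-!
Write `w := uκ` and `L := ∂₁(w ∂₁f) - ∂₂(w ∂₂f)`, and test `L` against the orthogonal frame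
`∂₁f, ∂₂f, ν`. Differentiating the conformality relations `|∂₁f|² = |∂₂f|² = ρ²`,
`⟨∂₁f, ∂₂f⟩ = 0` (with `∂₁∂₂f = ∂₂∂₁f`) gives `⟨∂₁f, ∂₁∂₁f⟩ = ρ ∂₁ρ = -⟨∂₁f, ∂₂∂₂f⟩` and its
mirror image, whence `⟨∂₁f, L⟩ = ∂₁(wρ²)`, `⟨∂₂f, L⟩ = -∂₂(wρ²)` and
`⟨ν, L⟩ = wρ²(κ₁ - κ₂)`. Since `κρ²` is a constant `c`, `wρ² = c u`, so `∂ᵢ(wρ²) = κρ² ∂ᵢu`,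
which are exactly the frame components of the right-hand side.
-/

open Filter Topology

section InnerProductFrame

variable {𝕜 E ι : Type*} [RCLike 𝕜] [NormedAddCommGroup E] [InnerProductSpace 𝕜 E]

theorem ext_inner_left_of_pairwise_inner_eq_zero [Fintype ι] [Nonempty ι] {v : ι → E}
    (hv₀ : ∀ i, v i ≠ 0) (hv : Pairwise fun i j => inner 𝕜 (v i) (v j) = 0)
    (hcard : Fintype.card ι = Module.finrank 𝕜 E) {x y : E}
    (h : ∀ i, inner 𝕜 (v i) x = inner 𝕜 (v i) y) : x = y := by
  let b := basisOfLinearIndependentOfCardEqFinrank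
    (linearIndependent_of_ne_zero_of_inner_eq_zero hv₀ hv) hcard
  exact InnerProductSpace.ext_inner_left_basis b
    (by simpa [b, coe_basisOfLinearIndependentOfCardEqFinrank] using h)

end InnerProductFrame

section Calculus

variable {G E F : Type*} [NormedAddCommGroup G] [NormedSpace ℝ G]
  [NormedAddCommGroup E] [NormedSpace ℝ E] [NormedAddCommGroup F] [InnerProductSpace ℝ F]

theorem ContDiffOn.differentiableAt_of_isOpen {Ω : Set G} {g : G → E} {p : G}
    (hg : ContDiffOn ℝ ∞ g Ω) (hΩ : IsOpen Ω) (hp : p ∈ Ω) : DifferentiableAt ℝ g p :=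
  (hg.contDiffAt (hΩ.mem_nhds hp)).differentiableAt (by simp)

theorem ContDiffOn.pd1 {Ω : Set (ℝ × ℝ)} {g : ℝ × ℝ → E} (hg : ContDiffOn ℝ ∞ g Ω)
    (hΩ : IsOpen Ω) : ContDiffOn ℝ ∞ (pd1 g) Ω :=
  (hg.fderiv_of_isOpen hΩ (by simp)).clm_apply contDiffOn_const

theorem ContDiffOn.pd2 {Ω : Set (ℝ × ℝ)} {g : ℝ × ℝ → E} (hg : ContDiffOn ℝ ∞ g Ω)
    (hΩ : IsOpen Ω) : ContDiffOn ℝ ∞ (pd2 g) Ω :=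
  (hg.fderiv_of_isOpen hΩ (by simp)).clm_apply contDiffOn_const

theorem pd1_pd2_eq_pd2_pd1 {g : ℝ × ℝ → E} {p : ℝ × ℝ} (hg : ContDiffAt ℝ 2 g p) :
    pd1 (pd2 g) p = pd2 (pd1 g) p := by
  have hsymm := hg.isSymmSndFDerivAt (by simp [minSmoothness_of_isRCLikeNormedField])
  have hdg : DifferentiableAt ℝ (fderiv ℝ g) p :=
    (hg.fderiv_right (m := 1) le_rfl).differentiableAt one_ne_zero
  have hpartial (v w : ℝ × ℝ) :
      fderiv ℝ (fun q => fderiv ℝ g q w) p v = fderiv ℝ (fderiv ℝ g) p v w := by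
    simp [fderiv_clm_apply hdg (differentiableAt_const w)]
  exact (hpartial _ _).trans ((hsymm _ _).trans (hpartial _ _).symm)

theorem pd1_smul {w : ℝ × ℝ → ℝ} {g : ℝ × ℝ → E} {p : ℝ × ℝ} (hw : DifferentiableAt ℝ w p)
    (hg : DifferentiableAt ℝ g p) : pd1 (fun q => w q • g q) p = w p • pd1 g p + pd1 w p • g p := by
  simp [pd1, fderiv_fun_smul hw hg]

theorem pd2_smul {w : ℝ × ℝ → ℝ} {g : ℝ × ℝ → E} {p : ℝ × ℝ} (hw : DifferentiableAt ℝ w p)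
    (hg : DifferentiableAt ℝ g p) : pd2 (fun q => w q • g q) p = w p • pd2 g p + pd2 w p • g p := by
  simp [pd2, fderiv_fun_smul hw hg]

theorem pd1_mul_sq {w r : ℝ × ℝ → ℝ} {p : ℝ × ℝ} (hw : DifferentiableAt ℝ w p)
    (hr : DifferentiableAt ℝ r p) :
    pd1 (fun q => w q * r q ^ 2) p = pd1 w p * r p ^ 2 + 2 * w p * r p * pd1 r p := by
  simp only [pd1, fderiv_fun_mul hw (hr.fun_pow 2), fderiv_fun_pow 2 hr, Nat.add_one_sub_one,
    pow_one, nsmul_eq_mul, Nat.cast_ofNat, add_apply, smul_apply, smul_eq_mul]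
  ring

theorem pd2_mul_sq {w r : ℝ × ℝ → ℝ} {p : ℝ × ℝ} (hw : DifferentiableAt ℝ w p)
    (hr : DifferentiableAt ℝ r p) :
    pd2 (fun q => w q * r q ^ 2) p = pd2 w p * r p ^ 2 + 2 * w p * r p * pd2 r p := by
  simp only [pd2, fderiv_fun_mul hw (hr.fun_pow 2), fderiv_fun_pow 2 hr, Nat.add_one_sub_one,
    pow_one, nsmul_eq_mul, Nat.cast_ofNat, add_apply, smul_apply, smul_eq_mul]
  ring

variable {a b : G → F} {r : G → ℝ} {p : G}

theorem inner_fderiv_self_eq_of_eventually_inner_self_eq_sq (ha : DifferentiableAt ℝ a p)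
    (hr : DifferentiableAt ℝ r p) (h : (fun q => ⟪a q, a q⟫) =ᶠ[𝓝 p] fun q => r q ^ 2) (v : G) :
    ⟪a p, fderiv ℝ a p v⟫ = r p * fderiv ℝ r p v := by
  have hd := congrArg (· v) (h.fderiv_eq (𝕜 := ℝ))
  simp only [fderiv_inner_apply ℝ ha ha, fderiv_fun_pow 2 hr, Nat.add_one_sub_one, pow_one,
    nsmul_eq_mul, Nat.cast_ofNat, smul_apply, smul_eq_mul] at hd
  linarith [real_inner_comm (a p) (fderiv ℝ a p v)]

theorem inner_fderiv_add_inner_fderiv_eq_zero_of_eventually_inner_eq_zero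
    (ha : DifferentiableAt ℝ a p) (hb : DifferentiableAt ℝ b p)
    (h : (fun q => ⟪a q, b q⟫) =ᶠ[𝓝 p] fun _ => 0) (v : G) :
    ⟪a p, fderiv ℝ b p v⟫ + ⟪fderiv ℝ a p v, b p⟫ = 0 := by
  have hd := congrArg (· v) (h.fderiv_eq (𝕜 := ℝ))
  simpa [fderiv_inner_apply ℝ ha hb] using hd

end Calculus

namespace IsCCC

variable {Ω : Set (ℝ × ℝ)} {f ν : ℝ × ℝ → EuclideanSpace ℝ (Fin 3)} {ρ κ₁ κ₂ : ℝ × ℝ → ℝ}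
  {p : ℝ × ℝ}

theorem ext_inner_frame (hccc : IsCCC Ω f ν ρ κ₁ κ₂) (hp : p ∈ Ω) {x y : EuclideanSpace ℝ (Fin 3)}
    (h₁ : ⟪pd1 f p, x⟫ = ⟪pd1 f p, y⟫) (h₂ : ⟪pd2 f p, x⟫ = ⟪pd2 f p, y⟫)
    (hν : ⟪ν p, x⟫ = ⟪ν p, y⟫) : x = y := by
  have hρ := hccc.ρ_pos p hp
  have h₁₀ : pd1 f p ≠ 0 := by rw [← inner_self_ne_zero (𝕜 := ℝ), hccc.g11 p hp]; positivity
  have h₂₀ : pd2 f p ≠ 0 := by rw [← inner_self_ne_zero (𝕜 := ℝ), hccc.g22 p hp]; positivity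
  have hν₀ : ν p ≠ 0 := by rw [← inner_self_ne_zero (𝕜 := ℝ), hccc.nu_unit p hp]; positivity
  refine ext_inner_left_of_pairwise_inner_eq_zero (𝕜 := ℝ) (v := ![pd1 f p, pd2 f p, ν p]) ?_ ?_
    (by simp) ?_
  · intro i
    fin_cases i <;> simpa
  · intro i j hij
    fin_cases i <;> fin_cases j <;>
      simp_all [real_inner_comm, hccc.g12 p hp, hccc.nu_f1 p hp, hccc.nu_f2 p hp]
  · intro i
    fin_cases i <;> assumption

theorem inner_pd1_fderiv_pd1 (hccc : IsCCC Ω f ν ρ κ₁ κ₂) (hΩ : IsOpen Ω) (hp : p ∈ Ω)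
    (v : ℝ × ℝ) : ⟪pd1 f p, fderiv ℝ (pd1 f) p v⟫ = ρ p * fderiv ℝ ρ p v :=
  inner_fderiv_self_eq_of_eventually_inner_self_eq_sq
    ((hccc.smooth_f.pd1 hΩ).differentiableAt_of_isOpen hΩ hp)
    (hccc.smooth_ρ.differentiableAt_of_isOpen hΩ hp)
    (eventuallyEq_of_mem (hΩ.mem_nhds hp) hccc.g11) v

theorem inner_pd2_fderiv_pd2 (hccc : IsCCC Ω f ν ρ κ₁ κ₂) (hΩ : IsOpen Ω) (hp : p ∈ Ω)
    (v : ℝ × ℝ) : ⟪pd2 f p, fderiv ℝ (pd2 f) p v⟫ = ρ p * fderiv ℝ ρ p v :=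
  inner_fderiv_self_eq_of_eventually_inner_self_eq_sq
    ((hccc.smooth_f.pd2 hΩ).differentiableAt_of_isOpen hΩ hp)
    (hccc.smooth_ρ.differentiableAt_of_isOpen hΩ hp)
    (eventuallyEq_of_mem (hΩ.mem_nhds hp) hccc.g22) v

theorem inner_pd1_fderiv_pd2_add_inner_fderiv_pd1_pd2 (hccc : IsCCC Ω f ν ρ κ₁ κ₂)
    (hΩ : IsOpen Ω) (hp : p ∈ Ω) (v : ℝ × ℝ) :
    ⟪pd1 f p, fderiv ℝ (pd2 f) p v⟫ + ⟪fderiv ℝ (pd1 f) p v, pd2 f p⟫ = 0 :=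
  inner_fderiv_add_inner_fderiv_eq_zero_of_eventually_inner_eq_zero
    ((hccc.smooth_f.pd1 hΩ).differentiableAt_of_isOpen hΩ hp)
    ((hccc.smooth_f.pd2 hΩ).differentiableAt_of_isOpen hΩ hp)
    (eventuallyEq_of_mem (hΩ.mem_nhds hp) hccc.g12) v

theorem pd1_pd2_f_eq_pd2_pd1_f (hccc : IsCCC Ω f ν ρ κ₁ κ₂) (hΩ : IsOpen Ω) (hp : p ∈ Ω) :
    pd1 (pd2 f) p = pd2 (pd1 f) p :=
  pd1_pd2_eq_pd2_pd1 ((hccc.smooth_f.contDiffAt (hΩ.mem_nhds hp)).of_le (by decide))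

theorem inner_pd1_pd11 (hccc : IsCCC Ω f ν ρ κ₁ κ₂) (hΩ : IsOpen Ω) (hp : p ∈ Ω) :
    ⟪pd1 f p, pd1 (pd1 f) p⟫ = ρ p * pd1 ρ p :=
  hccc.inner_pd1_fderiv_pd1 hΩ hp (1, 0)

theorem inner_pd2_pd22 (hccc : IsCCC Ω f ν ρ κ₁ κ₂) (hΩ : IsOpen Ω) (hp : p ∈ Ω) :
    ⟪pd2 f p, pd2 (pd2 f) p⟫ = ρ p * pd2 ρ p :=
  hccc.inner_pd2_fderiv_pd2 hΩ hp (0, 1)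

theorem inner_pd1_pd22 (hccc : IsCCC Ω f ν ρ κ₁ κ₂) (hΩ : IsOpen Ω) (hp : p ∈ Ω) :
    ⟪pd1 f p, pd2 (pd2 f) p⟫ = -(ρ p * pd1 ρ p) := by
  have h₁₂ := hccc.inner_pd1_fderiv_pd2_add_inner_fderiv_pd1_pd2 hΩ hp (0, 1)
  have h₂₂ : ⟪pd2 f p, pd2 (pd1 f) p⟫ = ρ p * pd1 ρ p := by
    rw [← hccc.pd1_pd2_f_eq_pd2_pd1_f hΩ hp]
    exact hccc.inner_pd2_fderiv_pd2 hΩ hp (1, 0)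
  change ⟪pd1 f p, pd2 (pd2 f) p⟫ + ⟪pd2 (pd1 f) p, pd2 f p⟫ = 0 at h₁₂
  linarith [real_inner_comm (pd2 f p) (pd2 (pd1 f) p)]

theorem inner_pd2_pd11 (hccc : IsCCC Ω f ν ρ κ₁ κ₂) (hΩ : IsOpen Ω) (hp : p ∈ Ω) :
    ⟪pd2 f p, pd1 (pd1 f) p⟫ = -(ρ p * pd2 ρ p) := by
  have h₁₂ := hccc.inner_pd1_fderiv_pd2_add_inner_fderiv_pd1_pd2 hΩ hp (1, 0)
  have h₁₁ : ⟪pd1 f p, pd1 (pd2 f) p⟫ = ρ p * pd2 ρ p := by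
    rw [hccc.pd1_pd2_f_eq_pd2_pd1_f hΩ hp]
    exact hccc.inner_pd1_fderiv_pd1 hΩ hp (0, 1)
  change ⟪pd1 f p, pd1 (pd2 f) p⟫ + ⟪pd1 (pd1 f) p, pd2 f p⟫ = 0 at h₁₂
  linarith [real_inner_comm (pd2 f p) (pd1 (pd1 f) p)]

theorem pd1_smul_pd1_sub_pd2_smul_pd2 (hccc : IsCCC Ω f ν ρ κ₁ κ₂) (hΩ : IsOpen Ω) (hp : p ∈ Ω)
    {w : ℝ × ℝ → ℝ} (hw : DifferentiableAt ℝ w p) :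
    pd1 (fun q => w q • pd1 f q) p - pd2 (fun q => w q • pd2 f q) p
      = w p • (pd1 (pd1 f) p - pd2 (pd2 f) p) + pd1 w p • pd1 f p - pd2 w p • pd2 f p := by
  rw [pd1_smul hw ((hccc.smooth_f.pd1 hΩ).differentiableAt_of_isOpen hΩ hp),
    pd2_smul hw ((hccc.smooth_f.pd2 hΩ).differentiableAt_of_isOpen hΩ hp), smul_sub]
  abel

theorem inner_pd1_pd1_smul_pd1_sub_pd2_smul_pd2 (hccc : IsCCC Ω f ν ρ κ₁ κ₂) (hΩ : IsOpen Ω)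
    (hp : p ∈ Ω) {w : ℝ × ℝ → ℝ} (hw : DifferentiableAt ℝ w p) :
    ⟪pd1 f p, pd1 (fun q => w q • pd1 f q) p - pd2 (fun q => w q • pd2 f q) p⟫
      = pd1 (fun q => w q * ρ q ^ 2) p := by
  rw [hccc.pd1_smul_pd1_sub_pd2_smul_pd2 hΩ hp hw,
    pd1_mul_sq hw (hccc.smooth_ρ.differentiableAt_of_isOpen hΩ hp)]
  simp only [inner_sub_right, inner_add_right, real_inner_smul_right, hccc.g11 p hp,
    hccc.g12 p hp, hccc.inner_pd1_pd11 hΩ hp, hccc.inner_pd1_pd22 hΩ hp]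
  ring

theorem inner_pd2_pd1_smul_pd1_sub_pd2_smul_pd2 (hccc : IsCCC Ω f ν ρ κ₁ κ₂) (hΩ : IsOpen Ω)
    (hp : p ∈ Ω) {w : ℝ × ℝ → ℝ} (hw : DifferentiableAt ℝ w p) :
    ⟪pd2 f p, pd1 (fun q => w q • pd1 f q) p - pd2 (fun q => w q • pd2 f q) p⟫
      = -pd2 (fun q => w q * ρ q ^ 2) p := by
  rw [hccc.pd1_smul_pd1_sub_pd2_smul_pd2 hΩ hp hw,
    pd2_mul_sq hw (hccc.smooth_ρ.differentiableAt_of_isOpen hΩ hp)]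
  simp only [inner_sub_right, inner_add_right, real_inner_smul_right, hccc.g22 p hp,
    real_inner_comm (pd1 f p), hccc.g12 p hp, hccc.inner_pd2_pd11 hΩ hp, hccc.inner_pd2_pd22 hΩ hp]
  ring

theorem inner_nu_pd1_smul_pd1_sub_pd2_smul_pd2 (hccc : IsCCC Ω f ν ρ κ₁ κ₂) (hΩ : IsOpen Ω)
    (hp : p ∈ Ω) {w : ℝ × ℝ → ℝ} (hw : DifferentiableAt ℝ w p) :
    ⟪ν p, pd1 (fun q => w q • pd1 f q) p - pd2 (fun q => w q • pd2 f q) p⟫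
      = w p * ρ p ^ 2 * (κ₁ p - κ₂ p) := by
  rw [hccc.pd1_smul_pd1_sub_pd2_smul_pd2 hΩ hp hw]
  simp only [inner_sub_right, inner_add_right, real_inner_smul_right, hccc.h11 p hp,
    hccc.h22 p hp, hccc.nu_f1 p hp, hccc.nu_f2 p hp]
  ring

end IsCCC

/-- The identity `∂₁(uκ·∂₁f) − ∂₂(uκ·∂₂f)
= κ(∂₁u·∂₁f − ∂₂u·∂₂f) − κ²ρ²·u·ν`, where `κ = κ₂ − κ₁`, provided `κρ²` is constant. -/
theorem d_df_J1 (Ω : Set (ℝ × ℝ)) (hΩ : IsOpen Ω)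
    (f ν : ℝ × ℝ → EuclideanSpace ℝ (Fin 3)) (ρ κ₁ κ₂ : ℝ × ℝ → ℝ)
    (hccc : IsCCC Ω f ν ρ κ₁ κ₂)
    (hconst : ∃ c : ℝ, ∀ p ∈ Ω, (κ₂ p - κ₁ p) * ρ p ^ 2 = c)
    (u : ℝ × ℝ → ℝ) (hu : ContDiffOn ℝ ∞ u Ω) :
    ∀ p ∈ Ω,
      pd1 (fun q => (u q * (κ₂ q - κ₁ q)) • pd1 f q) p
          - pd2 (fun q => (u q * (κ₂ q - κ₁ q)) • pd2 f q) p
        = (κ₂ p - κ₁ p) • (pd1 u p • pd1 f p - pd2 u p • pd2 f p)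
          - ((κ₂ p - κ₁ p) ^ 2 * ρ p ^ 2 * u p) • ν p := by
  obtain ⟨c, hc⟩ := hconst
  intro p hp
  have hu' := hu.differentiableAt_of_isOpen hΩ hp
  have hw : DifferentiableAt ℝ (fun q => u q * (κ₂ q - κ₁ q)) p :=
    hu'.fun_mul ((hccc.smooth_κ₂.differentiableAt_of_isOpen hΩ hp).sub
      (hccc.smooth_κ₁.differentiableAt_of_isOpen hΩ hp))
  have hwρ : (fun q => u q * (κ₂ q - κ₁ q) * ρ q ^ 2) =ᶠ[𝓝 p] fun q => c * u q :=
    eventuallyEq_of_mem (hΩ.mem_nhds hp) fun q hq => by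
      rw [mul_assoc, hc q hq, mul_comm]
  have hdwρ (v : ℝ × ℝ) :
      fderiv ℝ (fun q => u q * (κ₂ q - κ₁ q) * ρ q ^ 2) p v = c * fderiv ℝ u p v := by
    rw [hwρ.fderiv_eq, fderiv_const_mul hu']
    rfl
  have hpd₁ : pd1 (fun q => u q * (κ₂ q - κ₁ q) * ρ q ^ 2) p = c * pd1 u p := hdwρ (1, 0)
  have hpd₂ : pd2 (fun q => u q * (κ₂ q - κ₁ q) * ρ q ^ 2) p = c * pd2 u p := hdwρ (0, 1)
  refine hccc.ext_inner_frame hp ?_ ?_ ?_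
  · rw [hccc.inner_pd1_pd1_smul_pd1_sub_pd2_smul_pd2 hΩ hp hw, hpd₁, ← hc p hp]
    simp only [inner_sub_right, real_inner_smul_right, hccc.g11 p hp, hccc.g12 p hp,
      real_inner_comm (ν p), hccc.nu_f1 p hp]
    ring
  · rw [hccc.inner_pd2_pd1_smul_pd1_sub_pd2_smul_pd2 hΩ hp hw, hpd₂, ← hc p hp]
    simp only [inner_sub_right, real_inner_smul_right, hccc.g22 p hp, real_inner_comm (pd1 f p),
      hccc.g12 p hp, real_inner_comm (ν p), hccc.nu_f2 p hp]
    ring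
  · rw [hccc.inner_nu_pd1_smul_pd1_sub_pd2_smul_pd2 hΩ hp hw]
    simp only [inner_sub_right, real_inner_smul_right, hccc.nu_f1 p hp, hccc.nu_f2 p hp,
      hccc.nu_unit p hp]
    ring
end

section
/- Let Ω ⊆ ℝ² be open, and let f : Ω → ℍ be a purely imaginary quaternion-valued immersion in conformal curvature coordinates with conformal factor ρ, unit normal ν and principal curvatures κ₁, κ₂, such that ν = ρ⁻²·(∂₁f)·(∂₂f) (quaternion product) and κ₁ + κ₂ = 2 on Ω. Then for every smooth u : Ω → ℝ one has, at every point of Ω, the quaternion identity: −(∂₂(uν))·(∂₁f) + (∂₁(uν))·(∂₂f) = −(∂₁u)·∂₁f − (∂₂u)·∂₂f − 2ρ²·u·ν. -/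
open scoped RealInnerProductSpace Quaternion ContDiff

/-- `f : Ω → Im ℍ ≅ ℝ³` is a purely imaginary quaternion-valued immersion in conformal
curvature coordinates, with conformal factor `ρ`, unit normal `ν` and principal
curvatures `κ₁, κ₂`. -/
structure IsCCCQ (Ω : Set (ℝ × ℝ)) (f ν : ℝ × ℝ → ℍ[ℝ])
    (ρ κ₁ κ₂ : ℝ × ℝ → ℝ) : Prop where
  smooth_f : ContDiffOn ℝ ∞ f Ω
  smooth_ρ : ContDiffOn ℝ ∞ ρ Ω
  smooth_ν : ContDiffOn ℝ ∞ ν Ω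
  smooth_κ₁ : ContDiffOn ℝ ∞ κ₁ Ω
  smooth_κ₂ : ContDiffOn ℝ ∞ κ₂ Ω
  ρ_pos : ∀ p ∈ Ω, 0 < ρ p
  f_im : ∀ p ∈ Ω, (f p).re = 0
  nu_im : ∀ p ∈ Ω, (ν p).re = 0
  g11 : ∀ p ∈ Ω, ⟪pd1 f p, pd1 f p⟫ = ρ p ^ 2
  g22 : ∀ p ∈ Ω, ⟪pd2 f p, pd2 f p⟫ = ρ p ^ 2
  g12 : ∀ p ∈ Ω, ⟪pd1 f p, pd2 f p⟫ = 0
  nu_unit : ∀ p ∈ Ω, ⟪ν p, ν p⟫ = 1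
  nu_f1 : ∀ p ∈ Ω, ⟪ν p, pd1 f p⟫ = 0
  nu_f2 : ∀ p ∈ Ω, ⟪ν p, pd2 f p⟫ = 0
  h12 : ∀ p ∈ Ω, ⟪ν p, pd1 (pd2 f) p⟫ = 0
  h11 : ∀ p ∈ Ω, ⟪ν p, pd1 (pd1 f) p⟫ = ρ p ^ 2 * κ₁ p
  h22 : ∀ p ∈ Ω, ⟪ν p, pd2 (pd2 f) p⟫ = ρ p ^ 2 * κ₂ p

/-!
Write `a = ∂₁f`, `b = ∂₂f`. Since `a`, `b` are orthogonal imaginary quaternions of length `ρ`,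
the hypothesis `ν = ρ⁻² a b` gives `ν a = b` and `ν b = -a`. Differentiating these relations
(Weingarten) and using `∂₂a = ∂₁b`, the left-hand side collapses to
`-∂₁u·a - ∂₂u·b - u·Δf`. Conformality makes `Δf` orthogonal to `a` and `b`; an imaginary
quaternion anticommuting with `a` and `b` commutes with `ν`, so it is a real multiple of `ν`,
and `⟨Δf, ν⟩ = ρ²(κ₁ + κ₂) = 2ρ²` gives `Δf = 2ρ² ν`.
-/

namespace Quaternion

variable {a b x n : ℍ[ℝ]}

theorem re_mul_of_re_eq_zero_right (hb : b.re = 0) : (a * b).re = -⟪a, b⟫ := by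
  rw [inner_def, star_eq_neg.2 hb]; simp

theorem mul_self_of_re_eq_zero (ha : a.re = 0) : a * a = ((-⟪a, a⟫ : ℝ) : ℍ[ℝ]) := by
  rw [inner_self, coe_neg, ← self_mul_star, star_eq_neg.2 ha, mul_neg, neg_neg]

theorem mul_comm_eq_neg (ha : a.re = 0) (hb : b.re = 0) (hab : ⟪a, b⟫ = 0) :
    b * a = -(a * b) := by
  have h := self_add_star (a * b)
  rw [star_mul, star_eq_neg.2 ha, star_eq_neg.2 hb, neg_mul_neg,
    re_mul_of_re_eq_zero_right hb, hab] at h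
  exact eq_neg_of_add_eq_zero_right (by simpa using h)

theorem mul_mul_left_eq_smul (ha : a.re = 0) (hb : b.re = 0) (hab : ⟪a, b⟫ = 0) :
    a * b * a = ⟪a, a⟫ • b := by
  rw [mul_assoc, mul_comm_eq_neg ha hb hab, mul_neg, ← mul_assoc, mul_self_of_re_eq_zero ha,
    coe_mul_eq_smul, neg_smul, neg_neg]

theorem mul_mul_right_eq_smul (hb : b.re = 0) : a * b * b = -⟪b, b⟫ • a := by
  rw [mul_assoc, mul_self_of_re_eq_zero hb, mul_coe_eq_smul]

theorem eq_inner_smul_of_commute (hx : x.re = 0) (hn : n.re = 0) (hnn : ⟪n, n⟫ = 1)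
    (hxn : Commute x n) : x = ⟪x, n⟫ • n := by
  have hreal : x * n = ((x * n).re : ℍ[ℝ]) := by
    rw [← star_eq_self, star_mul, star_eq_neg.2 hn, star_eq_neg.2 hx, neg_mul_neg, hxn.eq]
  calc x = -(x * n * n) := by
        rw [mul_assoc, mul_self_of_re_eq_zero hn, hnn]; simp
    _ = ⟪x, n⟫ • n := by
        rw [hreal, re_mul_of_re_eq_zero_right hn, coe_mul_eq_smul, neg_smul, neg_neg]

end Quaternion

theorem commute_mul_of_mul_eq_neg {R : Type*} [Ring R] {x a b : R} (ha : x * a = -(a * x))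
    (hb : x * b = -(b * x)) : Commute x (a * b) := by
  rw [Commute, SemiconjBy, ← mul_assoc, ha, neg_mul, mul_assoc, hb, mul_neg, neg_neg, mul_assoc]

section Calculus

variable {E F : Type*} [NormedAddCommGroup E] [NormedSpace ℝ E] [NormedAddCommGroup F]
  {Ω : Set E} {p : E}

theorem fderiv_inner_apply_of_eqOn [InnerProductSpace ℝ F] {g h : E → F} {φ : E → ℝ}
    (hΩ : IsOpen Ω) (hp : p ∈ Ω) (hg : DifferentiableAt ℝ g p) (hh : DifferentiableAt ℝ h p)
    (hφ : Set.EqOn (fun q => ⟪g q, h q⟫) φ Ω) (v : E) :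
    ⟪g p, fderiv ℝ h p v⟫ + ⟪fderiv ℝ g p v, h p⟫ = fderiv ℝ φ p v := by
  rw [← fderiv_inner_apply (𝕜 := ℝ) hg hh, (hφ.eventuallyEq_of_mem (hΩ.mem_nhds hp)).fderiv_eq]

theorem fderiv_mul_apply_of_eqOn {𝔸 : Type*} [NormedRing 𝔸] [NormedAlgebra ℝ 𝔸] {g h φ : E → 𝔸}
    (hΩ : IsOpen Ω) (hp : p ∈ Ω) (hg : DifferentiableAt ℝ g p) (hh : DifferentiableAt ℝ h p)
    (hφ : Set.EqOn (fun q => g q * h q) φ Ω) (v : E) :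
    g p * fderiv ℝ h p v + fderiv ℝ g p v * h p = fderiv ℝ φ p v := by
  rw [← (hφ.eventuallyEq_of_mem (hΩ.mem_nhds hp)).fderiv_eq, fderiv_fun_mul' hg hh]
  simp [smul_eq_mul]

theorem fderiv_fun_smul_apply [NormedSpace ℝ F] {c : E → ℝ} {g : E → F}
    (hc : DifferentiableAt ℝ c p) (hg : DifferentiableAt ℝ g p) (v : E) :
    fderiv ℝ (fun q => c q • g q) p v = c p • fderiv ℝ g p v + fderiv ℝ c p v • g p := by
  simp [fderiv_fun_smul hc hg]

theorem re_fderiv_apply_eq_zero {g : E → ℍ[ℝ]} (hΩ : IsOpen Ω) (hp : p ∈ Ω)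
    (hg : DifferentiableAt ℝ g p) (hre : ∀ q ∈ Ω, (g q).re = 0) (v : E) :
    (fderiv ℝ g p v).re = 0 := by
  have h := fderiv_inner_apply_of_eqOn hΩ hp hg (differentiableAt_const (1 : ℍ[ℝ]))
    (φ := fun _ => 0) (fun q hq => by simpa [Quaternion.inner_def] using hre q hq) v
  simpa [Quaternion.inner_def] using h

theorem fderiv_fderiv_apply_right [NormedSpace ℝ F] {f : E → F}
    (hf : DifferentiableAt ℝ (fderiv ℝ f) p) (v w : E) :
    fderiv ℝ (fun q => fderiv ℝ f q w) p v = fderiv ℝ (fderiv ℝ f) p v w := by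
  simp [fderiv_clm_apply hf (differentiableAt_const w)]

theorem ContDiffAt.differentiableAt_fderiv_apply [NormedSpace ℝ F] {f : E → F}
    (hf : ContDiffAt ℝ 2 f p) (w : E) : DifferentiableAt ℝ (fun q => fderiv ℝ f q w) p :=
  ((hf.fderiv_right one_add_one_eq_two.le).clm_apply contDiffAt_const).differentiableAt
    one_ne_zero

end Calculus

section PartialDerivatives

variable {E : Type*} [NormedAddCommGroup E] [NormedSpace ℝ E] {f : ℝ × ℝ → E} {p : ℝ × ℝ}

theorem pd2_pd1_eq_pd1_pd2 (hf : ContDiffAt ℝ 2 f p) : pd2 (pd1 f) p = pd1 (pd2 f) p := by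
  have hf' : DifferentiableAt ℝ (fderiv ℝ f) p :=
    (hf.fderiv_right one_add_one_eq_two.le).differentiableAt one_ne_zero
  change fderiv ℝ (fun q => fderiv ℝ f q (1, 0)) p (0, 1)
    = fderiv ℝ (fun q => fderiv ℝ f q (0, 1)) p (1, 0)
  rw [fderiv_fderiv_apply_right hf', fderiv_fderiv_apply_right hf']
  exact (hf.isSymmSndFDerivAt (by simp)).eq _ _

end PartialDerivatives

namespace IsCCCQ

variable {Ω : Set (ℝ × ℝ)} {f ν : ℝ × ℝ → ℍ[ℝ]} {ρ κ₁ κ₂ : ℝ × ℝ → ℝ} {p : ℝ × ℝ}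

theorem contDiffAt_two (h : IsCCCQ Ω f ν ρ κ₁ κ₂) (hΩ : IsOpen Ω) (hp : p ∈ Ω) :
    ContDiffAt ℝ 2 f p :=
  (h.smooth_f.contDiffAt (hΩ.mem_nhds hp)).of_le (WithTop.coe_le_coe.2 le_top)

theorem differentiableAt_pd1 (h : IsCCCQ Ω f ν ρ κ₁ κ₂) (hΩ : IsOpen Ω) (hp : p ∈ Ω) :
    DifferentiableAt ℝ (pd1 f) p :=
  (h.contDiffAt_two hΩ hp).differentiableAt_fderiv_apply (1, 0)

theorem differentiableAt_pd2 (h : IsCCCQ Ω f ν ρ κ₁ κ₂) (hΩ : IsOpen Ω) (hp : p ∈ Ω) :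
    DifferentiableAt ℝ (pd2 f) p :=
  (h.contDiffAt_two hΩ hp).differentiableAt_fderiv_apply (0, 1)

theorem differentiableAt_nu (h : IsCCCQ Ω f ν ρ κ₁ κ₂) (hΩ : IsOpen Ω) (hp : p ∈ Ω) :
    DifferentiableAt ℝ ν p :=
  (h.smooth_ν.contDiffAt (hΩ.mem_nhds hp)).differentiableAt (by simp)

theorem re_pd1 (h : IsCCCQ Ω f ν ρ κ₁ κ₂) (hΩ : IsOpen Ω) (hp : p ∈ Ω) : (pd1 f p).re = 0 :=
  re_fderiv_apply_eq_zero hΩ hp ((h.contDiffAt_two hΩ hp).differentiableAt two_ne_zero) h.f_im _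

theorem re_pd2 (h : IsCCCQ Ω f ν ρ κ₁ κ₂) (hΩ : IsOpen Ω) (hp : p ∈ Ω) : (pd2 f p).re = 0 :=
  re_fderiv_apply_eq_zero hΩ hp ((h.contDiffAt_two hΩ hp).differentiableAt two_ne_zero) h.f_im _

theorem re_laplacian (h : IsCCCQ Ω f ν ρ κ₁ κ₂) (hΩ : IsOpen Ω) (hp : p ∈ Ω) :
    (pd1 (pd1 f) p + pd2 (pd2 f) p).re = 0 := by
  have h11 : (pd1 (pd1 f) p).re = 0 :=
    re_fderiv_apply_eq_zero hΩ hp (h.differentiableAt_pd1 hΩ hp) (fun _ => h.re_pd1 hΩ) _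
  have h22 : (pd2 (pd2 f) p).re = 0 :=
    re_fderiv_apply_eq_zero hΩ hp (h.differentiableAt_pd2 hΩ hp) (fun _ => h.re_pd2 hΩ) _
  rw [Quaternion.re_add, h11, h22, add_zero]

theorem inner_laplacian_pd1 (h : IsCCCQ Ω f ν ρ κ₁ κ₂) (hΩ : IsOpen Ω) (hp : p ∈ Ω) :
    ⟪pd1 (pd1 f) p + pd2 (pd2 f) p, pd1 f p⟫ = 0 := by
  have h11 : ⟪pd1 f p, pd1 (pd1 f) p⟫ + ⟪pd1 (pd1 f) p, pd1 f p⟫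
      = fderiv ℝ (fun q => ρ q ^ 2) p (1, 0) :=
    fderiv_inner_apply_of_eqOn hΩ hp (h.differentiableAt_pd1 hΩ hp)
      (h.differentiableAt_pd1 hΩ hp) h.g11 _
  have h22 : ⟪pd2 f p, pd1 (pd2 f) p⟫ + ⟪pd1 (pd2 f) p, pd2 f p⟫
      = fderiv ℝ (fun q => ρ q ^ 2) p (1, 0) :=
    fderiv_inner_apply_of_eqOn hΩ hp (h.differentiableAt_pd2 hΩ hp)
      (h.differentiableAt_pd2 hΩ hp) h.g22 _
  have h12 : ⟪pd1 f p, pd2 (pd2 f) p⟫ + ⟪pd2 (pd1 f) p, pd2 f p⟫ = 0 :=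
    (fderiv_inner_apply_of_eqOn hΩ hp (h.differentiableAt_pd1 hΩ hp)
      (h.differentiableAt_pd2 hΩ hp) h.g12 (0, 1)).trans (by simp)
  rw [pd2_pd1_eq_pd1_pd2 (h.contDiffAt_two hΩ hp)] at h12
  rw [inner_add_left]
  linarith [real_inner_comm (pd1 (pd1 f) p) (pd1 f p), real_inner_comm (pd2 (pd2 f) p) (pd1 f p),
    real_inner_comm (pd1 (pd2 f) p) (pd2 f p)]

theorem inner_laplacian_pd2 (h : IsCCCQ Ω f ν ρ κ₁ κ₂) (hΩ : IsOpen Ω) (hp : p ∈ Ω) :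
    ⟪pd1 (pd1 f) p + pd2 (pd2 f) p, pd2 f p⟫ = 0 := by
  have h11 : ⟪pd1 f p, pd2 (pd1 f) p⟫ + ⟪pd2 (pd1 f) p, pd1 f p⟫
      = fderiv ℝ (fun q => ρ q ^ 2) p (0, 1) :=
    fderiv_inner_apply_of_eqOn hΩ hp (h.differentiableAt_pd1 hΩ hp)
      (h.differentiableAt_pd1 hΩ hp) h.g11 _
  have h22 : ⟪pd2 f p, pd2 (pd2 f) p⟫ + ⟪pd2 (pd2 f) p, pd2 f p⟫
      = fderiv ℝ (fun q => ρ q ^ 2) p (0, 1) :=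
    fderiv_inner_apply_of_eqOn hΩ hp (h.differentiableAt_pd2 hΩ hp)
      (h.differentiableAt_pd2 hΩ hp) h.g22 _
  have h12 : ⟪pd1 f p, pd1 (pd2 f) p⟫ + ⟪pd1 (pd1 f) p, pd2 f p⟫ = 0 :=
    (fderiv_inner_apply_of_eqOn hΩ hp (h.differentiableAt_pd1 hΩ hp)
      (h.differentiableAt_pd2 hΩ hp) h.g12 (1, 0)).trans (by simp)
  rw [pd2_pd1_eq_pd1_pd2 (h.contDiffAt_two hΩ hp)] at h11
  rw [inner_add_left]
  linarith [real_inner_comm (pd1 (pd1 f) p) (pd2 f p), real_inner_comm (pd2 (pd2 f) p) (pd2 f p),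
    real_inner_comm (pd1 (pd2 f) p) (pd1 f p)]

theorem inner_laplacian_nu (h : IsCCCQ Ω f ν ρ κ₁ κ₂) (hp : p ∈ Ω) :
    ⟪pd1 (pd1 f) p + pd2 (pd2 f) p, ν p⟫ = ρ p ^ 2 * (κ₁ p + κ₂ p) := by
  rw [inner_add_left, real_inner_comm, h.h11 p hp, real_inner_comm, h.h22 p hp]
  ring

theorem nu_mul_pd1 (h : IsCCCQ Ω f ν ρ κ₁ κ₂) (hΩ : IsOpen Ω)
    (hν : ∀ q ∈ Ω, ν q = (ρ q ^ 2)⁻¹ • (pd1 f q * pd2 f q)) (hp : p ∈ Ω) :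
    ν p * pd1 f p = pd2 f p := by
  rw [hν p hp, smul_mul_assoc,
    Quaternion.mul_mul_left_eq_smul (h.re_pd1 hΩ hp) (h.re_pd2 hΩ hp) (h.g12 p hp), h.g11 p hp,
    smul_smul, inv_mul_cancel₀ (pow_pos (h.ρ_pos p hp) 2).ne', one_smul]

theorem nu_mul_pd2 (h : IsCCCQ Ω f ν ρ κ₁ κ₂) (hΩ : IsOpen Ω)
    (hν : ∀ q ∈ Ω, ν q = (ρ q ^ 2)⁻¹ • (pd1 f q * pd2 f q)) (hp : p ∈ Ω) :
    ν p * pd2 f p = -pd1 f p := by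
  rw [hν p hp, smul_mul_assoc, Quaternion.mul_mul_right_eq_smul (h.re_pd2 hΩ hp), h.g22 p hp,
    smul_smul, mul_neg, inv_mul_cancel₀ (pow_pos (h.ρ_pos p hp) 2).ne', neg_one_smul]

theorem pd1_nu_mul_pd2 (h : IsCCCQ Ω f ν ρ κ₁ κ₂) (hΩ : IsOpen Ω)
    (hν : ∀ q ∈ Ω, ν q = (ρ q ^ 2)⁻¹ • (pd1 f q * pd2 f q)) (hp : p ∈ Ω) :
    pd1 ν p * pd2 f p = -pd1 (pd1 f) p - ν p * pd1 (pd2 f) p := by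
  have hd := fderiv_mul_apply_of_eqOn hΩ hp (h.differentiableAt_nu hΩ hp)
    (h.differentiableAt_pd2 hΩ hp) (fun _ hq => h.nu_mul_pd2 hΩ hν hq) (1, 0)
  rw [fderiv_fun_neg] at hd
  exact eq_sub_of_add_eq' hd

theorem pd2_nu_mul_pd1 (h : IsCCCQ Ω f ν ρ κ₁ κ₂) (hΩ : IsOpen Ω)
    (hν : ∀ q ∈ Ω, ν q = (ρ q ^ 2)⁻¹ • (pd1 f q * pd2 f q)) (hp : p ∈ Ω) :
    pd2 ν p * pd1 f p = pd2 (pd2 f) p - ν p * pd2 (pd1 f) p :=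
  eq_sub_of_add_eq' <| fderiv_mul_apply_of_eqOn hΩ hp (h.differentiableAt_nu hΩ hp)
    (h.differentiableAt_pd1 hΩ hp) (fun _ hq => h.nu_mul_pd1 hΩ hν hq) (0, 1)

theorem laplacian_eq (h : IsCCCQ Ω f ν ρ κ₁ κ₂) (hΩ : IsOpen Ω)
    (hν : ∀ q ∈ Ω, ν q = (ρ q ^ 2)⁻¹ • (pd1 f q * pd2 f q)) (hp : p ∈ Ω) :
    pd1 (pd1 f) p + pd2 (pd2 f) p = (ρ p ^ 2 * (κ₁ p + κ₂ p)) • ν p := by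
  have hΔ := h.re_laplacian hΩ hp
  have hcomm : Commute (pd1 (pd1 f) p + pd2 (pd2 f) p) (ν p) := by
    rw [hν p hp]
    refine (commute_mul_of_mul_eq_neg ?_ ?_).smul_right _
    · exact Quaternion.mul_comm_eq_neg (h.re_pd1 hΩ hp) hΔ
        (by rw [real_inner_comm]; exact h.inner_laplacian_pd1 hΩ hp)
    · exact Quaternion.mul_comm_eq_neg (h.re_pd2 hΩ hp) hΔ
        (by rw [real_inner_comm]; exact h.inner_laplacian_pd2 hΩ hp)
  rw [← h.inner_laplacian_nu hp]
  exact Quaternion.eq_inner_smul_of_commute hΔ (h.nu_im p hp) (h.nu_unit p hp) hcomm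

end IsCCCQ

/-- For a CMC (`κ₁ + κ₂ = 2`) purely imaginary quaternionic immersion
with `ν = ρ⁻²·∂₁f·∂₂f`, one has
`−∂₂(uν)·∂₁f + ∂₁(uν)·∂₂f = −∂₁u·∂₁f − ∂₂u·∂₂f − 2ρ²·u·ν`. -/
theorem d_u_nu_J0_wedge_df_J0 (Ω : Set (ℝ × ℝ)) (hΩ : IsOpen Ω)
    (f ν : ℝ × ℝ → ℍ[ℝ]) (ρ κ₁ κ₂ : ℝ × ℝ → ℝ)
    (hccc : IsCCCQ Ω f ν ρ κ₁ κ₂)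
    (hν : ∀ p ∈ Ω, ν p = (ρ p ^ 2)⁻¹ • (pd1 f p * pd2 f p))
    (hH : ∀ p ∈ Ω, κ₁ p + κ₂ p = 2)
    (u : ℝ × ℝ → ℝ) (hu : ContDiffOn ℝ ∞ u Ω) :
    ∀ p ∈ Ω,
      -(pd2 (fun q => u q • ν q) p * pd1 f p) + pd1 (fun q => u q • ν q) p * pd2 f p
        = -(pd1 u p • pd1 f p) - pd2 u p • pd2 f p - (2 * ρ p ^ 2 * u p) • ν p := by
  intro p hp
  have hu : DifferentiableAt ℝ u p := (hu.contDiffAt (hΩ.mem_nhds hp)).differentiableAt (by simp)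
  have hν' := hccc.differentiableAt_nu hΩ hp
  have hΔ := hccc.laplacian_eq hΩ hν hp
  rw [hH p hp] at hΔ
  have h1 : pd1 (fun q => u q • ν q) p = u p • pd1 ν p + pd1 u p • ν p :=
    fderiv_fun_smul_apply hu hν' _
  have h2 : pd2 (fun q => u q • ν q) p = u p • pd2 ν p + pd2 u p • ν p :=
    fderiv_fun_smul_apply hu hν' _
  rw [h1, h2, add_mul, add_mul, smul_mul_assoc, smul_mul_assoc, smul_mul_assoc, smul_mul_assoc,
    hccc.nu_mul_pd1 hΩ hν hp, hccc.nu_mul_pd2 hΩ hν hp, hccc.pd1_nu_mul_pd2 hΩ hν hp,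
    hccc.pd2_nu_mul_pd1 hΩ hν hp, pd2_pd1_eq_pd1_pd2 (hccc.contDiffAt_two hΩ hp)]
  linear_combination (norm := module) (-u p) • hΔ
end

section
/- Let Ω ⊆ ℝ² be open, let f : Ω → ℍ be a continuously differentiable map with purely imaginary values, let f̃ : Ω → ℍ be a continuously differentiable map with |f̃| ≡ 1 satisfying ∂₁f̃ = f̃·∂₂f and ∂₂f̃ = −f̃·∂₁f on Ω, and let α be a fixed purely imaginary quaternion. Then the map ε := f̃⁻¹·α·f̃ takes purely imaginary values, |ε| ≡ |α|, and ε satisfies ∂₁ε = ε·∂₂f − ∂₂f·ε and ∂₂ε = ∂₁f·ε − ε·∂₁f on Ω. -/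
open scoped RealInnerProductSpace Quaternion

/-!
Conjugation by a nonzero quaternion preserves the real part, because `re (x * y) = re (y * x)`,
and the norm. Differentiating `ε = f̃⁻¹ α f̃` with `d(f̃⁻¹) = -f̃⁻¹ (df̃) f̃⁻¹` shows that wherever
`df̃ = f̃ c` one has `dε = ε c - c ε`; the two equations for `f̃` are of this form with
`c = ∂₂f` and `c = -∂₁f`.
-/

namespace Quaternion

theorem re_mul_comm {R : Type*} [CommRing R] (a b : ℍ[R]) : (a * b).re = (b * a).re := by
  simp only [re_mul]
  ring

theorem re_inv_mul_mul {R : Type*} [Field R] [LinearOrder R] [IsStrictOrderedRing R]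
    {u : ℍ[R]} (hu : u ≠ 0) (a : ℍ[R]) : (u⁻¹ * a * u).re = a.re := by
  rw [re_mul_comm, ← mul_assoc, mul_inv_cancel₀ hu, one_mul]

end Quaternion

theorem norm_inv_mul_mul {R : Type*} [NormedDivisionRing R] {u : R} (hu : u ≠ 0) (a : R) :
    ‖u⁻¹ * a * u‖ = ‖a‖ := by
  rw [norm_mul, norm_mul, norm_inv, mul_comm ‖u‖⁻¹, mul_assoc,
    inv_mul_cancel₀ (norm_ne_zero_iff.mpr hu), mul_one]

section ConjugationDerivative

variable {𝕜 E R : Type*} [NontriviallyNormedField 𝕜] [NormedAddCommGroup E] [NormedSpace 𝕜 E]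
  [NormedDivisionRing R] [NormedAlgebra 𝕜 R] {u : E → R} {p : E}

theorem fderiv_inv_mul_mul_apply (hu : DifferentiableAt 𝕜 u p) (hp : u p ≠ 0) (a : R) (v : E) :
    fderiv 𝕜 (fun q => (u q)⁻¹ * a * u q) p v
      = (u p)⁻¹ * a * fderiv 𝕜 u p v - (u p)⁻¹ * fderiv 𝕜 u p v * ((u p)⁻¹ * a * u p) := by
  have hinv := (hasFDerivAt_inv' (𝕜 := 𝕜) hp).comp p hu.hasFDerivAt
  have hconj : HasFDerivAt (fun q => (u q)⁻¹ * a * u q) _ p :=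
    (hinv.mul_const' a).mul' hu.hasFDerivAt
  rw [hconj.fderiv]
  simp only [Function.comp_apply, ContinuousLinearMap.neg_comp, add_apply,
    smul_apply, neg_apply, ContinuousLinearMap.comp_apply,
    ContinuousLinearMap.mulLeftRight_apply, smul_neg, smul_eq_mul, MulOpposite.smul_eq_mul_unop,
    MulOpposite.unop_op]
  noncomm_ring

theorem fderiv_inv_mul_mul_apply_of_eq_mul (hu : DifferentiableAt 𝕜 u p) (hp : u p ≠ 0) (a : R)
    {v : E} {c : R} (hv : fderiv 𝕜 u p v = u p * c) :
    fderiv 𝕜 (fun q => (u q)⁻¹ * a * u q) p v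
      = (u p)⁻¹ * a * u p * c - c * ((u p)⁻¹ * a * u p) := by
  rw [fderiv_inv_mul_mul_apply hu hp, hv, inv_mul_cancel_left₀ hp]
  simp only [mul_assoc]

end ConjugationDerivative

theorem rotation_field_solves_homogeneous_general (Ω : Set (ℝ × ℝ)) (hΩ : IsOpen Ω)
    (f : ℝ × ℝ → ℍ[ℝ])
    (ft : ℝ × ℝ → ℍ[ℝ]) (hft : ContDiffOn ℝ 1 ft Ω)
    (hft_norm : ∀ p ∈ Ω, ‖ft p‖ = 1)
    (hft1 : ∀ p ∈ Ω, pd1 ft p = ft p * pd2 f p)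
    (hft2 : ∀ p ∈ Ω, pd2 ft p = -(ft p * pd1 f p))
    (α : ℍ[ℝ]) (hα : α.re = 0) :
    ∀ p ∈ Ω,
      ((ft p)⁻¹ * α * ft p).re = 0 ∧
      ‖(ft p)⁻¹ * α * ft p‖ = ‖α‖ ∧
      pd1 (fun q => (ft q)⁻¹ * α * ft q) p
        = (ft p)⁻¹ * α * ft p * pd2 f p - pd2 f p * ((ft p)⁻¹ * α * ft p) ∧
      pd2 (fun q => (ft q)⁻¹ * α * ft q) p
        = pd1 f p * ((ft p)⁻¹ * α * ft p) - (ft p)⁻¹ * α * ft p * pd1 f p := by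
  intro p hp
  have hne : ft p ≠ 0 := norm_ne_zero_iff.mp (by simp [hft_norm p hp])
  have hdiff : DifferentiableAt ℝ ft p :=
    (hft.differentiableOn one_ne_zero p hp).differentiableAt (hΩ.mem_nhds hp)
  have hft2' : fderiv ℝ ft p (0, 1) = ft p * -pd1 f p := by
    rw [mul_neg]
    exact hft2 p hp
  refine ⟨(Quaternion.re_inv_mul_mul hne α).trans hα, norm_inv_mul_mul hne α,
    fderiv_inv_mul_mul_apply_of_eq_mul hdiff hne α (hft1 p hp), ?_⟩
  rw [pd2, fderiv_inv_mul_mul_apply_of_eq_mul hdiff hne α hft2']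
  noncomm_ring

/-- For a conjugate cousin `f̃` of `f` and a fixed imaginary quaternion
`α`, the field `ε = f̃⁻¹·α·f̃` is imaginary of constant length `|α|` and solves the
homogeneous conjugate variation system. -/
theorem rotation_field_solves_homogeneous (Ω : Set (ℝ × ℝ)) (hΩ : IsOpen Ω)
    (f : ℝ × ℝ → ℍ[ℝ]) (hf : ContDiffOn ℝ 1 f Ω) (hf_im : ∀ p ∈ Ω, (f p).re = 0)
    (ft : ℝ × ℝ → ℍ[ℝ]) (hft : ContDiffOn ℝ 1 ft Ω)
    (hft_norm : ∀ p ∈ Ω, ‖ft p‖ = 1)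
    (hft1 : ∀ p ∈ Ω, pd1 ft p = ft p * pd2 f p)
    (hft2 : ∀ p ∈ Ω, pd2 ft p = -(ft p * pd1 f p))
    (α : ℍ[ℝ]) (hα : α.re = 0) :
    ∀ p ∈ Ω,
      ((ft p)⁻¹ * α * ft p).re = 0 ∧
      ‖(ft p)⁻¹ * α * ft p‖ = ‖α‖ ∧
      pd1 (fun q => (ft q)⁻¹ * α * ft q) p
        = (ft p)⁻¹ * α * ft p * pd2 f p - pd2 f p * ((ft p)⁻¹ * α * ft p) ∧
      pd2 (fun q => (ft q)⁻¹ * α * ft q) p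
        = pd1 f p * ((ft p)⁻¹ * α * ft p) - (ft p)⁻¹ * α * ft p * pd1 f p :=
  rotation_field_solves_homogeneous_general Ω hΩ f ft hft hft_norm hft1 hft2 α hα
end
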